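/- Let G be a connected finite simple graph with 2K vertices. If G has a vertex j of degree 1 with neighbor k and the induced subgraph on V \ {j, k} is connected, and the lemma on distance-≤2 perfect pairings holds for connected graphs on 2K−2 vertices, then G admits a perfect distance-≤2 pairing of all 2K vertices that includes the pair (j, k). -/

import Mathlib

/-!
Pair the leaf `j` with its neighbour `k`. The remaining `2K - 2` vertices induce a connected
graph, which by hypothesis has a perfect distance-≤2 pairing; distances can only shrink when
passing from the induced subgraph to `G`, so that pairing together with `{j, k}` is a perfect
distance-≤2 pairing of `G`.
-/

open Function

lemma Function.Involutive.dite_subtype {α : Type*} {p : α → Prop} [DecidablePred p]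
    {f : Subtype p → Subtype p} {g : α → α} (hf : Involutive f) (hg : Involutive g)
    (hgp : ∀ a, ¬p a → ¬p (g a)) :
    Involutive fun a ↦ if h : p a then (f ⟨a, h⟩ : α) else g a := by
  intro a
  by_cases h : p a
  · simp [h, (f ⟨a, h⟩).2, hf _]
  · simp [h, hgp a h, hg a]

lemma Fintype.card_setOf_ne_and_ne {V : Type*} [Fintype V] [DecidableEq V] {j k : V} (hjk : j ≠ k) :
    Fintype.card {v | v ≠ j ∧ v ≠ k} = Fintype.card V - 2 := by
  have hset : {v | v ≠ j ∧ v ≠ k} = ({j, k} : Set V)ᶜ := by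
    ext v
    simp [not_or]
  rw [Fintype.card_congr (Equiv.setCongr hset), Fintype.card_compl_set, Fintype.card_eq_nat_card
    (α := ({j, k} : Set V)), Nat.card_coe_set_eq, Set.ncard_pair hjk]

namespace SimpleGraph

variable {V W : Type*} {G : SimpleGraph V}

lemma Reachable.dist_map_le {G' : SimpleGraph W} (f : G →g G') {u v : V}
    (hr : G.Reachable u v) : G'.dist (f u) (f v) ≤ G.dist u v := by
  obtain ⟨p, hp⟩ := hr.exists_walk_length_eq_dist
  calc G'.dist (f u) (f v) ≤ (p.map f).length := dist_le _
    _ = G.dist u v := by rw [Walk.length_map, hp]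

def IsDistLeTwoPairing (G : SimpleGraph V) (f : V → V) : Prop :=
  Involutive f ∧ ∀ v, f v ≠ v ∧ G.dist v (f v) ≤ 2

lemma IsDistLeTwoPairing.extend {s : Set V} [DecidablePred (· ∈ s)]
    (hs : (G.induce s).Connected) {f : s → s} (hf : (G.induce s).IsDistLeTwoPairing f)
    {g : V → V} (hg : Involutive g) (hgs : ∀ v ∉ s, g v ∉ s ∧ g v ≠ v ∧ G.dist v (g v) ≤ 2) :
    G.IsDistLeTwoPairing fun v ↦ if h : v ∈ s then (f ⟨v, h⟩ : V) else g v := by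
  refine ⟨hf.1.dite_subtype hg fun v hv ↦ (hgs v hv).1, fun v ↦ ?_⟩
  by_cases hv : v ∈ s
  · obtain ⟨hne, hdist⟩ := hf.2 ⟨v, hv⟩
    simp only [dif_pos hv]
    refine ⟨fun h ↦ hne (Subtype.ext h), le_trans ?_ hdist⟩
    exact (hs.preconnected ⟨v, hv⟩ (f ⟨v, hv⟩)).dist_map_le (Embedding.induce s).toHom
  · simpa only [dif_neg hv] using (hgs v hv).2

end SimpleGraph

theorem pairing_step_with_leaf_general {V : Type} [Fintype V] (G : SimpleGraph V)
    (K : ℕ) (hcard : Fintype.card V = 2 * K)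
    (j k : V) (hjk : G.Adj j k)
    (hrem : (G.induce {v | v ≠ j ∧ v ≠ k}).Connected)
    (IH : ∀ (V2 : Type) [Fintype V2] (H : SimpleGraph V2),
      Fintype.card V2 = 2 * K - 2 → H.Connected →
      ∃ f : V2 → V2, Function.Involutive f ∧ ∀ v, f v ≠ v ∧ H.dist v (f v) ≤ 2) :
    ∃ f : V → V, Function.Involutive f ∧
      (∀ v, f v ≠ v ∧ G.dist v (f v) ≤ 2) ∧ f j = k := by
  classical
  obtain ⟨f, hf⟩ := IH _ _ (by rw [Fintype.card_setOf_ne_and_ne hjk.ne, hcard]) hrem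
  have hswap : ∀ v ∉ {v | v ≠ j ∧ v ≠ k}, Equiv.swap j k v ∉ {v | v ≠ j ∧ v ≠ k} ∧
      Equiv.swap j k v ≠ v ∧ G.dist v (Equiv.swap j k v) ≤ 2 := by
    intro v hv
    obtain rfl | rfl : v = j ∨ v = k := by simpa [or_iff_not_imp_left] using hv
    · simp [hjk.ne.symm, SimpleGraph.dist_eq_one_iff_adj.mpr hjk]
    · simp [hjk.ne, SimpleGraph.dist_eq_one_iff_adj.mpr hjk.symm]
  obtain ⟨hinv, hpair⟩ :=
    SimpleGraph.IsDistLeTwoPairing.extend hrem hf (Equiv.swap_apply_self j k) hswap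
  exact ⟨_, hinv, hpair, by simp⟩

/-- Induction step (Case 1, connected remainder): if `j` has degree 1 with neighbor `k`,
removing `{j, k}` leaves a connected graph, and every connected graph on `2K - 2`
vertices has a perfect distance-≤2 pairing, then `G` has a perfect distance-≤2 pairing
containing the pair `(j, k)`. -/
theorem pairing_step_with_leaf {V : Type} [Fintype V] (G : SimpleGraph V)
    [DecidableRel G.Adj] (K : ℕ) (hcard : Fintype.card V = 2 * K) (hc : G.Connected)
    (j k : V) (hdeg : G.degree j = 1) (hjk : G.Adj j k)
    (hrem : (G.induce {v | v ≠ j ∧ v ≠ k}).Connected)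
    (IH : ∀ (V2 : Type) [Fintype V2] (H : SimpleGraph V2),
      Fintype.card V2 = 2 * K - 2 → H.Connected →
      ∃ f : V2 → V2, Function.Involutive f ∧ ∀ v, f v ≠ v ∧ H.dist v (f v) ≤ 2) :
    ∃ f : V → V, Function.Involutive f ∧
      (∀ v, f v ≠ v ∧ G.dist v (f v) ≤ 2) ∧ f j = k :=
  pairing_step_with_leaf_general G K hcard j k hjk hrem IH
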